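/- For every x ≥ 0, the Gaussian Q-function satisfies Craig's formula: Q(x) = (1/π) ∫₀^{π/2} exp(-x² / (2 sin² θ)) dθ, where Q(x) = ∫ₓ^∞ (1/√(2π)) exp(-t²/2) dt. -/

import Mathlib

/-!
Write `G x = ∫₀^{π/2} exp (-x² / (2 cos² θ)) dθ`; the reflection `θ ↦ π/2 - θ` turns Craig's
integral into `G x`. Differentiating under the integral sign and substituting `u = x tan θ`,
under which `x² / cos² θ = x² + u²` and `dθ · x / cos² θ = du`,
`G' x = -∫₀^∞ exp (-(x² + u²) / 2) du = -√(2π)/2 · exp (-x²/2) = π · Q' x`.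
Since `G 0 = π/2 = π Q 0`, integrating from `0` to `x` gives `G x = π Q x`.
-/

open MeasureTheory Real

/-- The Gaussian Q-function: the tail probability of the standard normal distribution. -/
noncomputable def gaussQ (x : ℝ) : ℝ :=
  ∫ t in Set.Ioi x, (1 / Real.sqrt (2 * Real.pi)) * Real.exp (-t ^ 2 / 2)

open Set Filter
open scoped Topology

lemma exp_neg_sq_div_two_eq (t : ℝ) : exp (-t ^ 2 / 2) = exp (-2⁻¹ * t ^ 2) := by
  ring_nf

lemma integrable_exp_neg_sq_div_two : Integrable fun t : ℝ => exp (-t ^ 2 / 2) := by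
  simpa only [exp_neg_sq_div_two_eq] using integrable_exp_neg_mul_sq (b := 2⁻¹) (by norm_num)

lemma integral_Ioi_exp_neg_sq_div_two : ∫ t in Ioi 0, exp (-t ^ 2 / 2) = √(2 * π) / 2 := by
  simp only [exp_neg_sq_div_two_eq, integral_gaussian_Ioi, div_inv_eq_mul, mul_comm π]

lemma gaussQ_eq_sub {x : ℝ} (hx : 0 ≤ x) :
    gaussQ x = 1 / √(2 * π) * (√(2 * π) / 2 - ∫ t in (0:ℝ)..x, exp (-t ^ 2 / 2)) := by
  rw [gaussQ, integral_const_mul, ← integral_Ioi_exp_neg_sq_div_two,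
    ← intervalIntegral.integral_Ioi_sub_Ioi integrable_exp_neg_sq_div_two.integrableOn hx,
    sub_sub_cancel]

lemma image_mul_tan_Ioo {x : ℝ} (hx : 0 < x) :
    (fun θ => x * tan θ) '' Ioo 0 (π / 2) = Ioi 0 := by
  ext u
  constructor
  · rintro ⟨θ, ⟨hθ₀, hθ₁⟩, rfl⟩
    exact mul_pos hx (tan_pos_of_pos_of_lt_pi_div_two hθ₀ hθ₁)
  · intro (hu : 0 < u)
    refine ⟨arctan (u / x), ⟨arctan_pos.2 (by positivity), arctan_lt_pi_div_two _⟩, ?_⟩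
    simp only [tan_arctan]
    field_simp

lemma injOn_mul_tan {x : ℝ} (hx : x ≠ 0) :
    InjOn (fun θ => x * tan θ) (Ioo (-(π / 2)) (π / 2)) :=
  fun _ ha _ hb h => injOn_tan ha hb (mul_left_cancel₀ hx h)

lemma integral_Ioo_div_cos_sq_mul_exp {x : ℝ} (hx : 0 < x) :
    ∫ θ in Ioo 0 (π / 2), x / cos θ ^ 2 * exp (-x ^ 2 / (2 * cos θ ^ 2)) =
      √(2 * π) / 2 * exp (-x ^ 2 / 2) := by
  have hcos : ∀ θ ∈ Ioo 0 (π / 2), 0 < cos θ := fun θ hθ =>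
    cos_pos_of_mem_Ioo ⟨by linarith [hθ.1, pi_pos], hθ.2⟩
  have hderiv : ∀ θ ∈ Ioo 0 (π / 2),
      HasDerivWithinAt (fun θ => x * tan θ) (x * (1 / cos θ ^ 2)) (Ioo 0 (π / 2)) θ :=
    fun θ hθ => ((hasDerivAt_tan (hcos θ hθ).ne').const_mul x).hasDerivWithinAt
  have hsubst := integral_image_eq_integral_abs_deriv_smul measurableSet_Ioo hderiv
    ((injOn_mul_tan hx.ne').mono (Ioo_subset_Ioo_left (by linarith [pi_pos])))
    (fun u => exp (-x ^ 2 / 2) * exp (-u ^ 2 / 2))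
  rw [image_mul_tan_Ioo hx, integral_const_mul, integral_Ioi_exp_neg_sq_div_two] at hsubst
  rw [mul_comm, hsubst]
  refine setIntegral_congr_fun measurableSet_Ioo fun θ hθ => ?_
  have hc := hcos θ hθ
  rw [smul_eq_mul, abs_of_pos (by positivity), ← exp_add, ← inv_one_add_tan_sq hc.ne']
  congr 2 <;> field_simp
  ring

lemma exp_neg_sq_div_le_one (x : ℝ) {c : ℝ} (hc : 0 ≤ c) : exp (-x ^ 2 / c) ≤ 1 :=
  exp_le_one_iff.2 (div_nonpos_of_nonpos_of_nonneg (by simpa using sq_nonneg x) hc)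

lemma hasDerivAt_exp_neg_sq_div (x c : ℝ) :
    HasDerivAt (fun x => exp (-x ^ 2 / (2 * c))) (-(x / c) * exp (-x ^ 2 / (2 * c))) x := by
  convert ((hasDerivAt_pow 2 x).fun_neg.div_const (2 * c)).exp using 1
  push_cast
  ring

-- `c = 0` is allowed, both sides being junk there (`x / 0 = 0`): it occurs at `cos (π / 2)`.
lemma div_mul_exp_neg_sq_div_le {x c : ℝ} (hx : 0 < x) (hc : 0 ≤ c) :
    x / c * exp (-x ^ 2 / (2 * c)) ≤ 2 / x := by
  rcases hc.eq_or_lt with rfl | hc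
  · simp only [div_zero, mul_zero, exp_zero, mul_one]
    positivity
  have ht : 0 < x ^ 2 / (2 * c) := by positivity
  calc x / c * exp (-x ^ 2 / (2 * c))
      ≤ x / c * (x ^ 2 / (2 * c))⁻¹ := by
        gcongr
        rw [neg_div, exp_neg]
        exact inv_anti₀ ht (by linarith [add_one_le_exp (x ^ 2 / (2 * c))])
    _ = 2 / x := by field_simp

lemma norm_exp_neg_sq_div_cos_sq_le_one (x θ : ℝ) : ‖exp (-x ^ 2 / (2 * cos θ ^ 2))‖ ≤ 1 := by
  rw [norm_of_nonneg (exp_pos _).le]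
  exact exp_neg_sq_div_le_one x (by positivity)

lemma intervalIntegrable_exp_neg_sq_div_cos_sq (x a b : ℝ) :
    IntervalIntegrable (fun θ => exp (-x ^ 2 / (2 * cos θ ^ 2))) volume a b :=
  intervalIntegrable_const.mono_fun' (by fun_prop : Measurable _).aestronglyMeasurable
    (Eventually.of_forall (norm_exp_neg_sq_div_cos_sq_le_one x))

-- Craig's integral with `cos` in place of `sin`, so that the substitution `u = x tan θ` applies.
noncomputable def craigIntegral (x : ℝ) : ℝ :=
  ∫ θ in (0:ℝ)..π / 2, exp (-x ^ 2 / (2 * cos θ ^ 2))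

lemma continuous_craigIntegral : Continuous craigIntegral :=
  intervalIntegral.continuous_of_dominated_interval (bound := fun _ => 1)
    (fun x => (by fun_prop : Measurable _).aestronglyMeasurable)
    (fun x => Eventually.of_forall fun θ _ => norm_exp_neg_sq_div_cos_sq_le_one x θ)
    intervalIntegrable_const
    (Eventually.of_forall fun θ _ => by fun_prop)

lemma hasDerivAt_craigIntegral {x : ℝ} (hx : 0 < x) :
    HasDerivAt craigIntegral (-(√(2 * π) / 2 * exp (-x ^ 2 / 2))) x := by
  have hball : Metric.ball x (x / 2) ∈ 𝓝 x := Metric.ball_mem_nhds x (half_pos hx)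
  have hbound : ∀ y ∈ Metric.ball x (x / 2), ∀ θ : ℝ,
      ‖-(y / cos θ ^ 2) * exp (-y ^ 2 / (2 * cos θ ^ 2))‖ ≤ 4 / x := by
    intro y hy θ
    rw [Metric.mem_ball, Real.dist_eq, abs_lt] at hy
    have hy₀ : 0 < y := by linarith
    rw [norm_mul, norm_neg, norm_of_nonneg (by positivity), norm_of_nonneg (exp_pos _).le]
    calc y / cos θ ^ 2 * exp (-y ^ 2 / (2 * cos θ ^ 2)) ≤ 2 / y :=
          div_mul_exp_neg_sq_div_le hy₀ (by positivity)
      _ ≤ 4 / x := by rw [div_le_div_iff₀ hy₀ hx]; linarith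
  obtain ⟨-, hderiv⟩ := intervalIntegral.hasDerivAt_integral_of_dominated_loc_of_deriv_le
    (F' := fun y θ => -(y / cos θ ^ 2) * exp (-y ^ 2 / (2 * cos θ ^ 2))) (bound := fun _ => 4 / x)
    hball (Eventually.of_forall fun y => (by fun_prop : Measurable _).aestronglyMeasurable)
    (intervalIntegrable_exp_neg_sq_div_cos_sq x 0 (π / 2))
    (by fun_prop : Measurable _).aestronglyMeasurable
    (Eventually.of_forall fun θ _ y hy => hbound y hy θ) intervalIntegrable_const
    (Eventually.of_forall fun θ _ y _ => hasDerivAt_exp_neg_sq_div y (cos θ ^ 2))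
  refine hderiv.congr_deriv ?_
  simp only [neg_mul, intervalIntegral.integral_neg]
  rw [intervalIntegral.integral_of_le (by positivity), integral_Ioc_eq_integral_Ioo,
    integral_Ioo_div_cos_sq_mul_exp hx]

lemma craigIntegral_eq_sub {x : ℝ} (hx : 0 ≤ x) :
    craigIntegral x = π / 2 - √(2 * π) / 2 * ∫ t in (0:ℝ)..x, exp (-t ^ 2 / 2) := by
  have hftc := intervalIntegral.integral_eq_sub_of_hasDerivAt_of_le hx
    continuous_craigIntegral.continuousOn (fun t ht => hasDerivAt_craigIntegral ht.1)
    ((by fun_prop : Continuous fun t => -(√(2 * π) / 2 * exp (-t ^ 2 / 2))).intervalIntegrable _ _)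
  have hzero : craigIntegral 0 = π / 2 := by simp [craigIntegral]
  rw [intervalIntegral.integral_neg, intervalIntegral.integral_const_mul, hzero] at hftc
  linarith

lemma integral_exp_neg_sq_div_sin_sq (x : ℝ) :
    ∫ θ in (0:ℝ)..π / 2, exp (-x ^ 2 / (2 * sin θ ^ 2)) = craigIntegral x := by
  simpa [craigIntegral, cos_pi_div_two_sub] using
    intervalIntegral.integral_comp_sub_left (fun θ => exp (-x ^ 2 / (2 * cos θ ^ 2))) (π / 2)
      (a := 0) (b := π / 2)

/-- Craig's formula for the Gaussian Q-function. -/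
theorem craig_formula (x : ℝ) (hx : 0 ≤ x) :
    gaussQ x =
      (1 / Real.pi) *
        ∫ θ in (0:ℝ)..(Real.pi / 2), Real.exp (-x ^ 2 / (2 * Real.sin θ ^ 2)) := by
  rw [integral_exp_neg_sq_div_sin_sq, gaussQ_eq_sub hx, craigIntegral_eq_sub hx]
  generalize ∫ t in (0:ℝ)..x, exp (-t ^ 2 / 2) = I
  have hsqrt : √(2 * π) ^ 2 = 2 * π := sq_sqrt (by positivity)
  field_simp
  linear_combination I * hsqrt
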